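/- arXiv:2410.12962 — 2 statements merged into one kernel-verified Lean document; each statement's English description precedes it below -/
import Mathlib

section
/- Let f : [0,1] → ℝ be continuous with graph G = {(x, f(x)) : x ∈ [0,1]}, and let S(v) = r·ρ_θ(v) + b be a contracting similitude (r ∈ (0,1), θ ∈ ℝ, b ∈ ℝ²) such that S(G) ⊆ G. Then ρ_θ is the identity matrix ((1,0),(0,1)) or its negative ((−1,0),(0,−1)); equivalently, θ ≡ 0 (mod 2π) or θ ≡ π (mod 2π). -/
/-- The rotation of ℝ² by angle θ, given by the matrix ((cos θ, sin θ), (−sin θ, cos θ)). -/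
noncomputable def rot (θ : ℝ) (v : ℝ × ℝ) : ℝ × ℝ :=
  (v.1 * Real.cos θ + v.2 * Real.sin θ, -v.1 * Real.sin θ + v.2 * Real.cos θ)

/-!
`S` induces the self-map `g x = (S (x, f x)).1` of `[0, 1]`, which is continuous and injective,
hence strictly monotone or antitone; either way `g ∘ g` is strictly increasing. If `a` is a fixed
point of `g`, then `p = (a, f a)` is fixed by `S`, and for another point `x` of `[0, 1]` the
iterates satisfy `S^[n] (x, f x) - p = rⁿ • ρ_{nθ} ((x, f x) - p)`. As `g ∘ g` is increasing,
`g^[2n] x - a` keeps the sign of `x - a`, so the first coordinate of `ρ_{2nθ} w` keeps its sign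
for the fixed nonzero vector `w = (x, f x) - p`. This forces `2θ ≡ 0 (mod 2π)`: otherwise the
angles `2nθ` reduced mod `2π` advance by a step of absolute value at most `π` and enter the
half-plane where that first coordinate is `≤ 0`.
-/

open Real Set Function

lemma rot_zero (v : ℝ × ℝ) : rot 0 v = v := by
  simp [rot]

lemma rot_pi (v : ℝ × ℝ) : rot π v = -v := by
  ext <;> simp [rot]

lemma rot_smul (θ c : ℝ) (v : ℝ × ℝ) : rot θ (c • v) = c • rot θ v := by
  ext <;> simp only [rot, Prod.smul_fst, Prod.smul_snd, smul_eq_mul] <;> ring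

lemma rot_sub (θ : ℝ) (u v : ℝ × ℝ) : rot θ (u - v) = rot θ u - rot θ v := by
  ext <;> simp only [rot, Prod.fst_sub, Prod.snd_sub] <;> ring

lemma rot_rot (θ φ : ℝ) (v : ℝ × ℝ) : rot θ (rot φ v) = rot (θ + φ) v := by
  ext <;> simp only [rot, cos_add, sin_add] <;> ring

lemma rot_neg_rot (θ : ℝ) (v : ℝ × ℝ) : rot (-θ) (rot θ v) = v := by
  rw [rot_rot, neg_add_cancel, rot_zero]

lemma continuous_rot (θ : ℝ) : Continuous (rot θ) := by
  unfold rot; fun_prop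

lemma rot_congr_angle {θ φ : ℝ} (h : (θ : Angle) = φ) : rot θ = rot φ := by
  have hcos : cos θ = cos φ := by rw [← Angle.cos_coe, h, Angle.cos_coe]
  have hsin : sin θ = sin φ := by rw [← Angle.sin_coe, h, Angle.sin_coe]
  funext v
  simp only [rot, hcos, hsin]

lemma rot_fst_eq_norm_mul_cos (s : ℝ) (w : ℝ × ℝ) :
    (rot s w).1 = ‖(⟨w.1, w.2⟩ : ℂ)‖ * cos (Complex.arg ⟨w.1, w.2⟩ - s) := by
  rw [cos_sub, mul_add, ← mul_assoc, ← mul_assoc, Complex.norm_mul_cos_arg,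
    Complex.norm_mul_sin_arg, rot]

/-- The step `t ≤ π` is at most the length of the arc `[π/2, 3π/2]` on which `cos ≤ 0`, so the
decreasing progression `ψ - n t` cannot jump over it. -/
lemma exists_nat_cos_sub_nat_mul_nonpos (ψ : ℝ) {t : ℝ} (ht : 0 < t) (htπ : t ≤ π) :
    ∃ n : ℕ, cos (ψ - n * t) ≤ 0 := by
  obtain ⟨M, hM⟩ := exists_nat_ge ((3 * π / 2 - ψ) / (2 * π))
  have hstart : 0 ≤ ψ + M * (2 * π) - 3 * π / 2 := by
    have := (div_le_iff₀ two_pi_pos).mp hM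
    linarith
  set n := ⌈(ψ + M * (2 * π) - 3 * π / 2) / t⌉₊
  have hn_ge : ψ + M * (2 * π) - 3 * π / 2 ≤ n * t := (div_le_iff₀ ht).mp (Nat.le_ceil _)
  have hn_lt : n * t < ψ + M * (2 * π) - 3 * π / 2 + t := by
    have := Nat.ceil_lt_add_one (div_nonneg hstart ht.le)
    rw [← lt_div_iff₀ ht, add_div, div_self ht.ne']
    exact this
  refine ⟨n, ?_⟩
  rw [← cos_add_nat_mul_two_pi _ M]
  apply cos_nonpos_of_pi_div_two_le_of_le <;> linarith

lemma coe_eq_zero_of_forall_rot_fst_pos {w : ℝ × ℝ} (hw : w ≠ 0) {θ : ℝ}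
    (h : ∀ n : ℕ, 0 < (rot (n * θ) w).1) : (θ : Angle) = 0 := by
  set z : ℂ := ⟨w.1, w.2⟩
  have hz : 0 < ‖z‖ :=
    norm_pos_iff.mpr fun h0 => hw (Prod.ext (congrArg Complex.re h0) (congrArg Complex.im h0))
  set t := (θ : Angle).toReal
  have hcos : ∀ n : ℕ, 0 < cos (z.arg - n * t) := by
    intro n
    have hangle : ((n * θ : ℝ) : Angle) = (n * t : ℝ) := by
      rw [← nsmul_eq_mul, ← nsmul_eq_mul, Angle.coe_nsmul, Angle.coe_nsmul, Angle.coe_toReal]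
    have hn := h n
    rw [rot_congr_angle hangle, rot_fst_eq_norm_mul_cos] at hn
    exact pos_of_mul_pos_right hn hz.le
  rw [← Angle.toReal_eq_zero_iff]
  by_contra ht
  rcases lt_or_gt_of_ne ht with hneg | hpos
  · obtain ⟨n, hn⟩ := exists_nat_cos_sub_nat_mul_nonpos (-z.arg) (neg_pos.mpr hneg)
      (by linarith [Angle.neg_pi_lt_toReal (θ : Angle)])
    rw [show -z.arg - n * -t = -(z.arg - n * t) by ring, cos_neg] at hn
    exact (hcos n).not_ge hn
  · obtain ⟨n, hn⟩ := exists_nat_cos_sub_nat_mul_nonpos z.arg hpos (Angle.toReal_le_pi _)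
    exact (hcos n).not_ge hn

lemma coe_eq_zero_of_forall_rot_fst_mul_pos {w : ℝ × ℝ} {θ : ℝ}
    (h : ∀ n : ℕ, 0 < (rot (n * θ) w).1 * w.1) : (θ : Angle) = 0 := by
  have hw₁ : w.1 ≠ 0 := by
    have h0 := h 0
    rw [Nat.cast_zero, zero_mul, rot_zero] at h0
    exact fun hw => h0.ne' (by rw [hw, mul_zero])
  apply coe_eq_zero_of_forall_rot_fst_pos (w := w.1 • w)
  · exact smul_ne_zero hw₁ fun hw => hw₁ (by rw [hw, Prod.fst_zero])
  · intro n
    rw [rot_smul, Prod.smul_fst, smul_eq_mul, mul_comm]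
    exact h n

lemma rot_eq_self_or_neg_of_coe_two_mul_eq_zero {θ : ℝ} (h : ((2 * θ : ℝ) : Angle) = 0) :
    ((∀ v, rot θ v = v) ∨ (∀ v, rot θ v = -v)) ∧
      ((∃ k : ℤ, θ = 2 * π * k) ∨ (∃ k : ℤ, θ = π + 2 * π * k)) := by
  rw [two_mul, ← two_nsmul, Angle.coe_nsmul, Angle.two_nsmul_eq_zero_iff] at h
  rcases h with h0 | hπ
  · obtain ⟨k, hk⟩ := Angle.coe_eq_zero_iff.mp h0
    refine ⟨Or.inl fun v => ?_, Or.inl ⟨k, by rw [← hk, zsmul_eq_mul, mul_comm]⟩⟩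
    rw [rot_congr_angle (h0.trans Angle.coe_zero.symm), rot_zero]
  · obtain ⟨k, hk⟩ := Angle.angle_eq_iff_two_pi_dvd_sub.mp hπ
    exact ⟨Or.inr fun v => by rw [rot_congr_angle hπ, rot_pi], Or.inr ⟨k, by linarith⟩⟩

section Similitude

variable {S : ℝ × ℝ → ℝ × ℝ} {r θ : ℝ} {b : ℝ × ℝ}

lemma injective_of_similitude (hS : ∀ v, S v = r • rot θ v + b) (hr : r ≠ 0) : Injective S := by
  intro u v huv
  rw [hS, hS, add_left_inj] at huv
  have hrot := smul_right_injective (ℝ × ℝ) hr huv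
  rw [← rot_neg_rot θ u, ← rot_neg_rot θ v, hrot]

lemma continuous_of_similitude (hS : ∀ v, S v = r • rot θ v + b) : Continuous S := by
  rw [funext hS]
  exact ((continuous_rot θ).const_smul r).add continuous_const

lemma iterate_sub_eq_of_isFixedPt (hS : ∀ v, S v = r • rot θ v + b) {p : ℝ × ℝ}
    (hp : IsFixedPt S p) (n : ℕ) (v : ℝ × ℝ) :
    S^[n] v - p = r ^ n • rot (n * θ) (v - p) := by
  induction n with
  | zero => simp [rot_zero]
  | succ n ih =>
    have hstep : ∀ u, S u - p = r • rot θ (u - p) := fun u => by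
      conv_lhs => rw [← hp.eq, hS, hS]
      rw [add_sub_add_right_eq_sub, ← smul_sub, rot_sub]
    rw [iterate_succ_apply', hstep, ih, rot_smul, rot_rot, smul_smul, pow_succ', Nat.cast_succ,
      add_one_mul, add_comm θ]

end Similitude

section Graph

variable {α β : Type*} {f : α → β} {s : Set α} {S : α × β → α × β}

lemma apply_graph_eq (hSG : S '' ((fun x => (x, f x)) '' s) ⊆ (fun x => (x, f x)) '' s)
    {x : α} (hx : x ∈ s) :
    (S (x, f x)).1 ∈ s ∧ S (x, f x) = ((S (x, f x)).1, f (S (x, f x)).1) := by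
  obtain ⟨y, hy, hyx⟩ := hSG (mem_image_of_mem S (mem_image_of_mem _ hx))
  rw [← hyx]
  exact ⟨hy, rfl⟩

lemma mapsTo_fst_apply_graph (hSG : S '' ((fun x => (x, f x)) '' s) ⊆ (fun x => (x, f x)) '' s) :
    MapsTo (fun x => (S (x, f x)).1) s s :=
  fun _ hx => (apply_graph_eq hSG hx).1

lemma injOn_fst_apply_graph (hS : Injective S)
    (hSG : S '' ((fun x => (x, f x)) '' s) ⊆ (fun x => (x, f x)) '' s) :
    InjOn (fun x => (S (x, f x)).1) s := by
  intro x hx y hy hxy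
  have hfst : (S (x, f x)).1 = (S (y, f y)).1 := hxy
  have := (apply_graph_eq hSG hx).2.trans (hfst ▸ (apply_graph_eq hSG hy).2.symm)
  exact congrArg Prod.fst (hS this)

lemma iterate_apply_graph_eq (hSG : S '' ((fun x => (x, f x)) '' s) ⊆ (fun x => (x, f x)) '' s)
    {x : α} (hx : x ∈ s) (n : ℕ) :
    S^[n] (x, f x) = ((fun x => (S (x, f x)).1)^[n] x, f ((fun x => (S (x, f x)).1)^[n] x)) := by
  induction n with
  | zero => rfl
  | succ n ih =>
    rw [iterate_succ_apply', ih, iterate_succ_apply',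
      (apply_graph_eq hSG ((mapsTo_fst_apply_graph hSG).iterate n hx)).2]

end Graph

lemma StrictMonoOn.compares_iterate {α : Type*} [LinearOrder α] {h : α → α} {s : Set α} {a x : α}
    (hh : StrictMonoOn h s) (hmaps : MapsTo h s s) (ha : a ∈ s) (hfix : IsFixedPt h a)
    (hx : x ∈ s) (n : ℕ) {o : Ordering} :
    o.Compares (h^[n] x) a ↔ o.Compares x a := by
  induction n with
  | zero => rfl
  | succ n ih =>
    have hstep := hh.compares (hmaps.iterate n hx) ha (o := o)
    rw [hfix.eq] at hstep
    rw [iterate_succ_apply', hstep, ih]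

lemma StrictMonoOn.iterate_sub_mul_sub_pos {h : ℝ → ℝ} {s : Set ℝ} {a x : ℝ}
    (hh : StrictMonoOn h s) (hmaps : MapsTo h s s) (ha : a ∈ s) (hfix : IsFixedPt h a)
    (hx : x ∈ s) (hxa : x ≠ a) (n : ℕ) : 0 < (h^[n] x - a) * (x - a) := by
  rcases lt_or_gt_of_ne hxa with hlt | hgt
  · have := (hh.compares_iterate hmaps ha hfix hx n (o := .lt)).mpr hlt
    exact mul_pos_of_neg_of_neg (sub_neg.mpr this) (sub_neg.mpr hlt)
  · have := (hh.compares_iterate hmaps ha hfix hx n (o := .gt)).mpr hgt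
    exact mul_pos (sub_pos.mpr this) (sub_pos.mpr hgt)

lemma strictMonoOn_iterate_two_of_injOn_Icc {α : Type*} [ConditionallyCompleteLinearOrder α]
    [TopologicalSpace α] [OrderTopology α] [DenselyOrdered α] {h : α → α} {a b : α}
    (hab : a ≤ b) (hc : ContinuousOn h (Icc a b)) (hinj : InjOn h (Icc a b))
    (hmaps : MapsTo h (Icc a b) (Icc a b)) : StrictMonoOn h^[2] (Icc a b) := by
  rcases hc.strictMonoOn_of_injOn_Icc' hab hinj with hmono | hanti
  exacts [hmono.comp hmono hmaps, hanti.comp hanti hmaps]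

theorem rotation_of_graph_similitude_is_plus_minus_id (f : ℝ → ℝ)
    (hf : ContinuousOn f (Set.Icc (0 : ℝ) 1))
    (G : Set (ℝ × ℝ)) (hG : G = (fun x => (x, f x)) '' Set.Icc (0 : ℝ) 1)
    (r θ : ℝ) (b : ℝ × ℝ) (hr : r ∈ Set.Ioo (0 : ℝ) 1)
    (S : ℝ × ℝ → ℝ × ℝ) (hS : ∀ v, S v = r • rot θ v + b)
    (hSG : S '' G ⊆ G) :
    ((∀ v, rot θ v = v) ∨ (∀ v, rot θ v = -v)) ∧
      ((∃ k : ℤ, θ = 2 * Real.pi * k) ∨ (∃ k : ℤ, θ = Real.pi + 2 * Real.pi * k)) := by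
  subst hG
  set g : ℝ → ℝ := fun x => (S (x, f x)).1
  have hmaps : MapsTo g (Icc 0 1) (Icc 0 1) := mapsTo_fst_apply_graph hSG
  have hcont : ContinuousOn g (Icc 0 1) :=
    ((continuous_of_similitude hS).comp_continuousOn (continuousOn_id.prodMk hf)).fst
  have hinj : InjOn g (Icc 0 1) := injOn_fst_apply_graph (injective_of_similitude hS hr.1.ne') hSG
  obtain ⟨a, ha, hfix⟩ := exists_mem_Icc_isFixedPt_of_mapsTo hcont zero_le_one hmaps
  obtain ⟨x, hx, hxa⟩ : ∃ x ∈ Icc (0 : ℝ) 1, x ≠ a := by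
    rcases eq_or_ne a 0 with rfl | ha0
    exacts [⟨1, right_mem_Icc.mpr zero_le_one, one_ne_zero⟩,
      ⟨0, left_mem_Icc.mpr zero_le_one, ha0.symm⟩]
  have hSa : IsFixedPt S (a, f a) := by
    rw [IsFixedPt, (apply_graph_eq hSG ha).2]
    exact congrArg (fun y => (y, f y)) hfix
  have key : ((2 * θ : ℝ) : Angle) = 0 := by
    refine coe_eq_zero_of_forall_rot_fst_mul_pos (w := (x, f x) - (a, f a)) fun n => ?_
    have horbit := congrArg Prod.fst (iterate_sub_eq_of_isFixedPt hS hSa (2 * n) (x, f x))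
    have hcast : ((2 * n : ℕ) : ℝ) * θ = n * (2 * θ) := by push_cast; ring
    rw [iterate_apply_graph_eq hSG hx, iterate_mul, hcast] at horbit
    have hsign := (strictMonoOn_iterate_two_of_injOn_Icc zero_le_one hcont hinj hmaps
      ).iterate_sub_mul_sub_pos (hmaps.iterate 2) ha (hfix.iterate 2) hx hxa n
    simp only [Prod.fst_sub, Prod.smul_fst, smul_eq_mul] at horbit
    rw [horbit, mul_assoc] at hsign
    exact pos_of_mul_pos_right hsign (pow_pos hr.1 _).le
  exact rot_eq_self_or_neg_of_coe_two_mul_eq_zero key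
end

section
/- Let I = [a,b] (a < b) be a compact interval, f : I → ℝ a continuous function, and G = {(x, f(x)) : x ∈ I} ⊆ ℝ² its graph. Then G is a self-similar set if and only if G is a straight line segment, i.e., G equals the segment joining (a, f(a)) and (b, f(b)). -/
/-- A (contracting) similitude of ℝ²: a map `S v = r • ρ_θ v + b` with `r ∈ (0,1)`. -/
def IsSimilitude (S : ℝ × ℝ → ℝ × ℝ) : Prop :=
  ∃ (r θ : ℝ) (b : ℝ × ℝ), r ∈ Set.Ioo (0 : ℝ) 1 ∧ ∀ v, S v = r • rot θ v + b

/-- A compact set `K ⊆ ℝ²` is self-similar if it is the union of its images under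
finitely many (at least one) contracting similitudes. -/
def IsSelfSimilar (K : Set (ℝ × ℝ)) : Prop :=
  IsCompact K ∧ ∃ (k : ℕ) (S : Fin k → ℝ × ℝ → ℝ × ℝ),
    0 < k ∧ (∀ i, IsSimilitude (S i)) ∧ K = ⋃ i, S i '' K

/-!
Each similitude `Sᵢ = rᵢ ρ_{θᵢ} + bᵢ` maps the graph into itself, so the rotation by `θᵢ` maps
the set of chord slopes of `f` into itself through the Möbius map
`s ↦ (s cos θ - sin θ) / (cos θ + s sin θ)`; the slopes form an interval because `f` is
continuous. Unless `sin θ = 0`, the sign of `sin θ (cos θ + s sin θ)`, constant on this interval,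
bounds it on one side, while the Möbius map moves every slope towards that side, by at least a
fixed amount beyond any given slope. So every `Sᵢ` acts on the graph as
`(x, y) ↦ (ρᵢ x + βᵢ, ρᵢ y + γᵢ)`, with the same ratio in both coordinates.

Subtract the chord through the endpoints: the result `g` vanishes at `a` and `b`, and over each
iterated image of `[a, b]` its graph is a copy of the whole graph scaled by the same ratio.
Copies of every small size cover `[a, b]`, so `g` is Lipschitz, and every `[x, y]` contains a
copy of length comparable to `y - x`, whose endpoints carry equal values of `g`. Cutting out
such a horizontal chord improves any upper bound on the slopes of `g` by a fixed factor, so `g`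
is nonincreasing; so is `-g`, hence `g = 0` and the graph is the segment.
-/

open Set Filter Topology Real

def chordSlopes (f : ℝ → ℝ) (s : Set ℝ) : Set ℝ :=
  {q | ∃ x ∈ s, ∃ y ∈ s, x < y ∧ q = (f y - f x) / (y - x)}

theorem isPreconnected_chordSlopes {f : ℝ → ℝ} {s : Set ℝ} (hs : Convex ℝ s)
    (hf : ContinuousOn f s) : IsPreconnected (chordSlopes f s) := by
  have hpairs : Convex ℝ (s ×ˢ s ∩ {p : ℝ × ℝ | p.1 < p.2}) :=
    (hs.prod hs).inter <| by
      simpa [sub_neg] using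
        convex_halfSpace_lt (LinearMap.fst ℝ ℝ ℝ - LinearMap.snd ℝ ℝ ℝ).isLinear (0 : ℝ)
  have himage : chordSlopes f s =
      (fun p : ℝ × ℝ => (f p.2 - f p.1) / (p.2 - p.1)) '' (s ×ˢ s ∩ {p | p.1 < p.2}) := by
    ext q
    constructor
    · rintro ⟨x, hx, y, hy, hxy, rfl⟩
      exact ⟨(x, y), ⟨⟨hx, hy⟩, hxy⟩, rfl⟩
    · rintro ⟨⟨x, y⟩, ⟨⟨hx, hy⟩, hxy⟩, rfl⟩
      exact ⟨x, hx, y, hy, hxy, rfl⟩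
  rw [himage]
  refine hpairs.isPreconnected.image _ (ContinuousOn.div ?_ (by fun_prop) ?_)
  · exact (hf.comp continuousOn_snd fun p hp => hp.1.2).sub
      (hf.comp continuousOn_fst fun p hp => hp.1.1)
  · exact fun p hp => sub_ne_zero.2 hp.2.ne'

theorem false_of_mapsTo_moebius_of_mul_neg {J : Set ℝ} {s₀ c σ : ℝ} (hs₀ : s₀ ∈ J)
    (hneg : ∀ s ∈ J, σ * (c + s * σ) < 0)
    (hmaps : MapsTo (fun s => (s * c - σ) / (c + s * σ)) J J) : False := by
  have hσ : σ ≠ 0 := by rintro rfl; simpa using hneg s₀ hs₀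
  set η := σ ^ 2 / -(σ * (c + s₀ * σ))
  have hη : 0 < η := div_pos (by positivity) (neg_pos.2 (hneg s₀ hs₀))
  have hstep : ∀ s ∈ J, s₀ ≤ s → s + η ≤ (s * c - σ) / (c + s * σ) := by
    intro s hs hs₀s
    have hD := neg_pos.2 (hneg s hs)
    have hsub : (s * c - σ) / (c + s * σ) - s = σ ^ 2 * (1 + s ^ 2) / -(σ * (c + s * σ)) := by
      have : c + s * σ ≠ 0 := by rintro h; simp [h] at hD
      field_simp
      ring
    have : η ≤ σ ^ 2 * (1 + s ^ 2) / -(σ * (c + s * σ)) :=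
      calc η ≤ σ ^ 2 / -(σ * (c + s * σ)) :=
            div_le_div_of_nonneg_left (sq_nonneg σ) hD (by nlinarith [sq_nonneg σ])
        _ ≤ _ := div_le_div_of_nonneg_right (le_mul_of_one_le_right (sq_nonneg σ)
            (by nlinarith [sq_nonneg s])) hD.le
    linarith
  have horbit : ∀ n : ℕ, ∃ s ∈ J, s₀ + n * η ≤ s := by
    intro n
    induction n with
    | zero => exact ⟨s₀, hs₀, by simp⟩
    | succ n ih =>
      obtain ⟨s, hs, hle⟩ := ih
      refine ⟨_, hmaps hs, ?_⟩
      have := hstep s hs (by nlinarith)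
      push_cast
      linarith
  obtain ⟨n, hn⟩ := exists_nat_gt ((-(σ * c) / σ ^ 2 - s₀) / η)
  obtain ⟨s, hs, hle⟩ := horbit n
  have hbound : s < -(σ * c) / σ ^ 2 := by
    rw [lt_div_iff₀ (by positivity)]
    linarith [hneg s hs]
  rw [div_lt_iff₀ hη] at hn
  linarith

theorem eq_zero_of_mapsTo_moebius {J : Set ℝ} (hJ : IsPreconnected J) (hne : J.Nonempty)
    {c σ : ℝ} (hden : ∀ s ∈ J, c + s * σ ≠ 0)
    (hmaps : MapsTo (fun s => (s * c - σ) / (c + s * σ)) J J) : σ = 0 := by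
  by_contra hσ
  obtain ⟨s₀, hs₀⟩ := hne
  have hne0 : ∀ s ∈ J, σ * (c + s * σ) ≠ 0 := fun s hs => mul_ne_zero hσ (hden s hs)
  have hsign : (∀ s ∈ J, σ * (c + s * σ) < 0) ∨ ∀ s ∈ J, 0 < σ * (c + s * σ) := by
    by_contra! h
    obtain ⟨⟨s₁, hs₁, h₁⟩, s₂, hs₂, h₂⟩ := h
    obtain ⟨s, hs, hs0⟩ := hJ.intermediate_value hs₂ hs₁
      (f := fun s => σ * (c + s * σ)) (by fun_prop) ⟨(h₂.lt_of_ne (hne0 s₂ hs₂)).le, h₁⟩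
    exact hne0 s hs hs0
  rcases hsign with hneg | hpos
  · exact false_of_mapsTo_moebius_of_mul_neg hs₀ hneg hmaps
  · -- reflecting slopes `s ↦ -s` conjugates the Möbius map of `σ` to that of `-σ`
    refine false_of_mapsTo_moebius_of_mul_neg (J := -J) (σ := -σ) (c := c) (s₀ := -s₀)
      (by simpa using hs₀) (fun s hs => ?_) (fun s hs => ?_)
    · have := hpos (-s) hs
      linarith [show -σ * (c + s * -σ) = -(σ * (c + -s * σ)) by ring]
    · have := hmaps hs
      simp only [Set.mem_neg] at this ⊢
      convert this using 1
      rw [← neg_div]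
      ring_nf

theorem moebius_mem_chordSlopes_of_mapsTo_graphOn {f : ℝ → ℝ} {s : Set ℝ} {r θ : ℝ}
    {t : ℝ × ℝ} (hr : 0 < r)
    (hS : MapsTo (fun v => r • rot θ v + t) (s.graphOn f) (s.graphOn f)) {q : ℝ}
    (hq : q ∈ chordSlopes f s) :
    cos θ + q * sin θ ≠ 0 ∧ (q * cos θ - sin θ) / (cos θ + q * sin θ) ∈ chordSlopes f s := by
  obtain ⟨x, hx, y, hy, hxy, rfl⟩ := hq
  set q := (f y - f x) / (y - x)
  have hfq : f y - f x = q * (y - x) := (div_mul_cancel₀ _ (sub_ne_zero.2 hxy.ne')).symm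
  set P := r • rot θ (x, f x) + t
  set Q := r • rot θ (y, f y) + t
  obtain ⟨hP, hfP⟩ : P.1 ∈ s ∧ f P.1 = P.2 := mem_graphOn.1 (hS ⟨x, hx, rfl⟩)
  obtain ⟨hQ, hfQ⟩ : Q.1 ∈ s ∧ f Q.1 = Q.2 := mem_graphOn.1 (hS ⟨y, hy, rfl⟩)
  have h₁ : Q.1 - P.1 = r * (y - x) * (cos θ + q * sin θ) := by
    simp only [P, Q, rot, Prod.fst_add, Prod.smul_fst, smul_eq_mul]
    linear_combination (r * sin θ) * hfq
  have h₂ : Q.2 - P.2 = r * (y - x) * (q * cos θ - sin θ) := by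
    simp only [P, Q, rot, Prod.snd_add, Prod.smul_snd, smul_eq_mul]
    linear_combination (r * cos θ) * hfq
  have hr' : r * (y - x) ≠ 0 := mul_ne_zero hr.ne' (sub_ne_zero.2 hxy.ne')
  have hD : cos θ + q * sin θ ≠ 0 := by
    intro hD
    have hQP : Q.1 = P.1 := by linear_combination h₁ + r * (y - x) * hD
    have hN : q * cos θ - sin θ = 0 := by
      refine (mul_eq_zero.1 ?_).resolve_left hr'
      rw [← h₂, ← hfP, ← hfQ, hQP, sub_self]
    exact one_ne_zero <| by
      linear_combination (-1 : ℝ) * sin_sq_add_cos_sq θ + cos θ * hD - sin θ * hN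
  refine ⟨hD, ?_⟩
  have hT : (q * cos θ - sin θ) / (cos θ + q * sin θ) = (Q.2 - P.2) / (Q.1 - P.1) := by
    rw [h₁, h₂, mul_div_mul_left _ _ hr']
  rcases lt_or_gt_of_ne (show P.1 ≠ Q.1 by
    intro h; apply mul_ne_zero hr' hD; rw [← h₁, h, sub_self]) with hPQ | hQP
  · exact ⟨P.1, hP, Q.1, hQ, hPQ, by rw [hT, hfP, hfQ]⟩
  · refine ⟨Q.1, hQ, P.1, hP, hQP, ?_⟩
    rw [hT, hfP, hfQ, ← neg_sub P.2, ← neg_sub P.1, neg_div_neg_eq]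

theorem sin_eq_zero_of_mapsTo_graphOn {f : ℝ → ℝ} {s : Set ℝ} (hs : Convex ℝ s)
    (hs' : s.Nontrivial) (hf : ContinuousOn f s) {r θ : ℝ} {t : ℝ × ℝ} (hr : 0 < r)
    (hS : MapsTo (fun v => r • rot θ v + t) (s.graphOn f) (s.graphOn f)) : sin θ = 0 := by
  have hne : (chordSlopes f s).Nonempty := by
    obtain ⟨x, hx, y, hy, hxy⟩ := hs'
    rcases hxy.lt_or_gt with h | h
    exacts [⟨_, x, hx, y, hy, h, rfl⟩, ⟨_, y, hy, x, hx, h, rfl⟩]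
  exact eq_zero_of_mapsTo_moebius (isPreconnected_chordSlopes hs hf) hne
    (fun q hq => (moebius_mem_chordSlopes_of_mapsTo_graphOn hr hS hq).1)
    (fun q hq => (moebius_mem_chordSlopes_of_mapsTo_graphOn hr hS hq).2)

theorem rot_of_sin_eq_zero {θ : ℝ} (h : sin θ = 0) (v : ℝ × ℝ) : rot θ v = cos θ • v := by
  ext <;> simp [rot, h, mul_comm]

theorem exists_affine_selfMaps_of_isSelfSimilar_graphOn {f : ℝ → ℝ} {s : Set ℝ}
    (hs : Convex ℝ s) (hs' : s.Nontrivial) (hf : ContinuousOn f s)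
    (h : IsSelfSimilar (s.graphOn f)) :
    ∃ (k : ℕ) (ρ β γ : Fin k → ℝ), (∀ i, 0 < |ρ i| ∧ |ρ i| < 1) ∧
      (∀ i, MapsTo (fun x => ρ i * x + β i) s s) ∧
      (∀ i, ∀ x ∈ s, f (ρ i * x + β i) = ρ i * f x + γ i) ∧
      s ⊆ ⋃ i, (fun x => ρ i * x + β i) '' s := by
  obtain ⟨-, k, S, -, hsim, hunion⟩ := h
  choose r θ t hr hS using hsim
  have hmaps (i : Fin k) : MapsTo (S i) (s.graphOn f) (s.graphOn f) := fun v hv => by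
    rw [hunion]
    exact mem_iUnion.2 ⟨i, v, hv, rfl⟩
  have hsin (i : Fin k) : sin (θ i) = 0 :=
    sin_eq_zero_of_mapsTo_graphOn hs hs' hf (hr i).1 (funext (hS i) ▸ hmaps i)
  have hS' (i : Fin k) (x y : ℝ) :
      S i (x, y) = (r i * cos (θ i) * x + (t i).1, r i * cos (θ i) * y + (t i).2) := by
    rw [hS, rot_of_sin_eq_zero (hsin i)]
    ext <;> simp [mul_assoc]
  refine ⟨k, fun i => r i * cos (θ i), fun i => (t i).1, fun i => (t i).2,
    fun i => ?_, fun i x hx => ?_, fun i x hx => ?_, fun x hx => ?_⟩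
  · rcases sin_eq_zero_iff_cos_eq.1 (hsin i) with h | h <;>
      simp [h, abs_of_pos (hr i).1, (hr i).1, (hr i).2]
  · have := hmaps i ⟨x, hx, rfl⟩
    rw [hS', mem_graphOn] at this
    exact this.1
  · have := hmaps i ⟨x, hx, rfl⟩
    rw [hS', mem_graphOn] at this
    exact this.2
  · have : (x, f x) ∈ ⋃ i, S i '' s.graphOn f := hunion ▸ ⟨x, hx, rfl⟩
    obtain ⟨i, ⟨u, v⟩, huv, hx'⟩ := mem_iUnion.1 this
    rw [hS', Prod.ext_iff] at hx'
    exact mem_iUnion.2 ⟨i, u, (mem_graphOn.1 huv).1, hx'.1⟩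

theorem antitoneOn_of_horizontalChords {g : ℝ → ℝ} {s : Set ℝ} {L ε : ℝ} (hε₀ : 0 < ε)
    (hε₁ : ε ≤ 1) (hL : ∀ x ∈ s, ∀ y ∈ s, x ≤ y → g y - g x ≤ L * (y - x))
    (hchord : ∀ x ∈ s, ∀ y ∈ s, x < y → ∃ c ∈ s, ∃ d ∈ s,
      x ≤ c ∧ c ≤ d ∧ d ≤ y ∧ ε * (y - x) ≤ d - c ∧ g c = g d) :
    AntitoneOn g s := by
  -- cutting out a horizontal chord improves any nonnegative upper slope bound by `1 - ε`
  have key (n : ℕ) : ∀ x ∈ s, ∀ y ∈ s, x ≤ y → g y - g x ≤ (1 - ε) ^ n * max L 0 * (y - x) := by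
    induction n with
    | zero =>
      intro x hx y hy hxy
      simpa using (hL x hx y hy hxy).trans
        (mul_le_mul_of_nonneg_right (le_max_left L 0) (sub_nonneg.2 hxy))
    | succ n ih =>
      intro x hx y hy hxy
      rcases hxy.eq_or_lt with rfl | hlt
      · simp
      obtain ⟨c, hc, d, hd, hxc, hcd, hdy, hlen, hgcd⟩ := hchord x hx y hy hlt
      have hK : 0 ≤ (1 - ε) ^ n * max L 0 := by
        have := le_max_right L 0
        have : 0 ≤ 1 - ε := by linarith
        positivity
      calc g y - g x = (g c - g x) + (g y - g d) := by rw [hgcd]; ring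
        _ ≤ (1 - ε) ^ n * max L 0 * (c - x) + (1 - ε) ^ n * max L 0 * (y - d) :=
          add_le_add (ih x hx c hc hxc) (ih d hd y hy hdy)
        _ = (1 - ε) ^ n * max L 0 * ((y - x) - (d - c)) := by ring
        _ ≤ (1 - ε) ^ n * max L 0 * ((1 - ε) * (y - x)) := by gcongr; linarith
        _ = (1 - ε) ^ (n + 1) * max L 0 * (y - x) := by ring
  intro x hx y hy hxy
  have hlim : Tendsto (fun n : ℕ => (1 - ε) ^ n * max L 0 * (y - x)) atTop (𝓝 0) := by
    simpa using ((tendsto_pow_atTop_nhds_zero_of_lt_one (by linarith) (by linarith)).mul_const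
      (max L 0)).mul_const (y - x)
  linarith [ge_of_tendsto' hlim fun n => key n x hx y hy hxy]

theorem sub_le_of_subset_biUnion_Icc {g : ℝ → ℝ} {C δ : ℝ} (hC : 0 ≤ C)
    (F : Finset (ℝ × ℝ)) (hlen : ∀ p ∈ F, p.2 - p.1 ≤ δ)
    (hosc : ∀ p ∈ F, ∀ u ∈ Icc p.1 p.2, ∀ v ∈ Icc p.1 p.2, g v - g u ≤ C * (p.2 - p.1))
    {x y h : ℝ} (hxy : x ≤ y) (hcov : Icc x y ⊆ ⋃ p ∈ F, Icc p.1 p.2)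
    (hh : ∀ p ∈ F, x ∈ Icc p.1 p.2 → x - p.1 ≤ h) :
    g y - g x ≤ C * (2 * (y - x) + h + δ) := by
  induction F using Finset.strongInduction generalizing x h with
  | H F ih =>
  obtain ⟨p₀, hp₀, hxp₀⟩ := mem_iUnion₂.1 (hcov (left_mem_Icc.2 hxy))
  -- Greedy chain: follow the interval through `x` reaching farthest right, then recurse from its
  -- right end with the intervals missing `x`. These all start right of `x`, so the overhang `h`
  -- is at most the last step and no point is counted more than twice.
  obtain ⟨p, hp, hpmax⟩ := (F.filter fun p => x ∈ Icc p.1 p.2).exists_max_image Prod.snd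
    ⟨p₀, Finset.mem_filter.2 ⟨hp₀, hxp₀⟩⟩
  obtain ⟨hpF, hxp⟩ := Finset.mem_filter.1 hp
  have hpx := hh p hpF hxp
  rcases le_or_gt y p.2 with hyp | hyp
  · refine (hosc p hpF x hxp y ⟨hxp.1.trans hxy, hyp⟩).trans
      (mul_le_mul_of_nonneg_left ?_ hC)
    linarith [hlen p hpF, hxp.1]
  set F' := F.filter fun q => x ∉ Icc q.1 q.2
  have hF' : F' ⊂ F := Finset.filter_ssubset.2 ⟨p, hpF, not_not.2 hxp⟩
  have hcov' : Icc p.2 y ⊆ ⋃ q ∈ F', Icc q.1 q.2 := by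
    rw [← closure_Ioc hyp.ne]
    refine closure_minimal (fun z hz => ?_) (isClosed_biUnion_finset fun q _ => isClosed_Icc)
    obtain ⟨q, hq, hzq⟩ := mem_iUnion₂.1 (hcov ⟨hxp.2.trans hz.1.le, hz.2⟩)
    refine mem_iUnion₂.2 ⟨q, Finset.mem_filter.2 ⟨hq, fun hxq => ?_⟩, hzq⟩
    linarith [hpmax q (Finset.mem_filter.2 ⟨hq, hxq⟩), hz.1, hzq.2]
  have hh' : ∀ q ∈ F', p.2 ∈ Icc q.1 q.2 → p.2 - q.1 ≤ p.2 - x := by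
    intro q hq hpq
    obtain ⟨-, hxq⟩ := Finset.mem_filter.1 hq
    have : x < q.1 := by
      by_contra! h
      exact hxq ⟨h, hxp.2.trans hpq.2⟩
    linarith
  have := ih F' hF' (fun q hq => hlen q (Finset.mem_filter.1 hq).1)
    (fun q hq => hosc q (Finset.mem_filter.1 hq).1) hyp.le hcov' hh'
  have := hosc p hpF x hxp p.2 (right_mem_Icc.2 (hxp.1.trans hxp.2))
  nlinarith

theorem image_affine_Icc_eq_uIcc {a b : ℝ} (hab : a ≤ b) (q t : ℝ) :
    (fun x => q * x + t) '' Icc a b = uIcc (q * a + t) (q * b + t) := by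
  rw [← uIcc_of_le hab, ← image_add_const_uIcc, ← image_const_mul_uIcc, image_image]

/-- The graph of `g` over the image of `x ↦ q * x + t` is the image of its graph over `[a, b]`
under a homothety of ratio `q`. -/
def IsSimilarCopy (g : ℝ → ℝ) (a b q t : ℝ) : Prop :=
  MapsTo (fun x => q * x + t) (Icc a b) (Icc a b) ∧
    ∀ x ∈ Icc a b, ∀ y ∈ Icc a b, g (q * x + t) - g (q * y + t) = q * (g x - g y)

namespace IsSimilarCopy

variable {g : ℝ → ℝ} {a b q t : ℝ}

theorem one_zero : IsSimilarCopy g a b 1 0 :=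
  ⟨fun x hx => by simpa using hx, fun x _ y _ => by simp⟩

theorem comp {q' t' : ℝ} (h : IsSimilarCopy g a b q t) (h' : IsSimilarCopy g a b q' t') :
    IsSimilarCopy g a b (q * q') (q * t' + t) := by
  refine ⟨fun x hx => ?_, fun x hx y hy => ?_⟩
  · simpa [mul_add, mul_assoc, add_assoc] using h.1 (h'.1 hx)
  · have e (z : ℝ) : q * q' * z + (q * t' + t) = q * (q' * z + t') + t := by ring
    rw [e, e, h.2 _ (h'.1 hx) _ (h'.1 hy), h'.2 x hx y hy, mul_assoc]

theorem neg (h : IsSimilarCopy g a b q t) : IsSimilarCopy (-g) a b q t :=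
  ⟨h.1, fun x hx y hy => by simp only [Pi.neg_apply]; linear_combination -h.2 x hx y hy⟩

theorem abs_sub_le {M : ℝ} (h : IsSimilarCopy g a b q t) (hM : ∀ x ∈ Icc a b, |g x| ≤ M)
    {u v : ℝ} (hu : u ∈ (fun x => q * x + t) '' Icc a b)
    (hv : v ∈ (fun x => q * x + t) '' Icc a b) : |g u - g v| ≤ |q| * (2 * M) := by
  obtain ⟨x, hx, rfl⟩ := hu
  obtain ⟨y, hy, rfl⟩ := hv
  rw [h.2 x hx y hy, abs_mul]
  gcongr
  linarith [abs_sub (g x) (g y), hM x hx, hM y hy]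

theorem exists_comp_mem_image {ι : Type*} {ρ β : ι → ℝ}
    (hcopy : ∀ i, IsSimilarCopy g a b (ρ i) (β i))
    (hcover : Icc a b ⊆ ⋃ i, (fun x => ρ i * x + β i) '' Icc a b)
    (h : IsSimilarCopy g a b q t) {z : ℝ} (hz : z ∈ (fun x => q * x + t) '' Icc a b) :
    ∃ i, IsSimilarCopy g a b (q * ρ i) (q * β i + t) ∧
      z ∈ (fun x => q * ρ i * x + (q * β i + t)) '' Icc a b := by
  obtain ⟨u, hu, rfl⟩ := hz
  obtain ⟨i, v, hv, rfl⟩ := mem_iUnion.1 (hcover hu)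
  exact ⟨i, h.comp (hcopy i), v, hv, by ring⟩

end IsSimilarCopy

section SimilarCopies

variable {ι : Type*} {g : ℝ → ℝ} {a b : ℝ} {ρ β : ι → ℝ}

theorem exists_finset_isSimilarCopy_cover [Fintype ι]
    (hcopy : ∀ i, IsSimilarCopy g a b (ρ i) (β i))
    (hcover : Icc a b ⊆ ⋃ i, (fun x => ρ i * x + β i) '' Icc a b) {R : ℝ}
    (hR : ∀ i, |ρ i| ≤ R) (n : ℕ) :
    ∃ F : Finset (ℝ × ℝ), (∀ p ∈ F, IsSimilarCopy g a b p.1 p.2 ∧ |p.1| ≤ R ^ n) ∧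
      Icc a b ⊆ ⋃ p ∈ F, (fun x => p.1 * x + p.2) '' Icc a b := by
  induction n with
  | zero => exact ⟨{(1, 0)}, by simpa using IsSimilarCopy.one_zero, fun x hx => by simpa using hx⟩
  | succ n ih =>
    obtain ⟨F, hF, hFcov⟩ := ih
    refine ⟨(F ×ˢ Finset.univ).image fun pi => (pi.1.1 * ρ pi.2, pi.1.1 * β pi.2 + pi.1.2),
      ?_, fun z hz => ?_⟩
    · simp only [Finset.mem_image, Finset.mem_product, Finset.mem_univ, and_true]
      rintro _ ⟨⟨p, i⟩, hp, rfl⟩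
      refine ⟨(hF p hp).1.comp (hcopy i), ?_⟩
      rw [abs_mul, pow_succ]
      exact mul_le_mul (hF p hp).2 (hR i) (abs_nonneg _)
        (pow_nonneg ((abs_nonneg _).trans (hR i)) _)
    · obtain ⟨p, hp, hzp⟩ := mem_iUnion₂.1 (hFcov hz)
      obtain ⟨i, -, hzi⟩ := (hF p hp).1.exists_comp_mem_image hcopy hcover hzp
      exact mem_iUnion₂.2 ⟨(p.1 * ρ i, p.1 * β i + p.2),
        Finset.mem_image.2 ⟨(p, i), Finset.mem_product.2 ⟨hp, Finset.mem_univ i⟩, rfl⟩, hzi⟩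

theorem exists_isSimilarCopy_mem_uIcc (hcopy : ∀ i, IsSimilarCopy g a b (ρ i) (β i))
    (hcover : Icc a b ⊆ ⋃ i, (fun x => ρ i * x + β i) '' Icc a b) {ρₘ R : ℝ} (hρₘ : 0 ≤ ρₘ)
    (hρ : ∀ i, ρₘ ≤ |ρ i| ∧ |ρ i| ≤ R) (hR : R < 1) {z ε : ℝ} (hz : z ∈ Icc a b)
    (hε : 0 < ε) (hεab : ε ≤ b - a) :
    ∃ q t, IsSimilarCopy g a b q t ∧ z ∈ uIcc (q * a + t) (q * b + t) ∧
      ρₘ * ε ≤ |q| * (b - a) ∧ |q| * (b - a) ≤ ε := by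
  have hba : 0 < b - a := hε.trans_le hεab
  obtain ⟨i₀, -⟩ := mem_iUnion.1 (hcover hz)
  have hR₀ : 0 ≤ R := (abs_nonneg _).trans (hρ i₀).2
  -- descend through nested copies containing `z` until the ratio drops below `ε`
  have key (n : ℕ) : ∀ q t, IsSimilarCopy g a b q t → z ∈ (fun x => q * x + t) '' Icc a b →
      ρₘ * ε ≤ |q| * (b - a) → |q| * R ^ n * (b - a) ≤ ε →
      ∃ q t, IsSimilarCopy g a b q t ∧ z ∈ (fun x => q * x + t) '' Icc a b ∧
        ρₘ * ε ≤ |q| * (b - a) ∧ |q| * (b - a) ≤ ε := by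
    induction n with
    | zero => exact fun q t h hz h₁ h₂ => ⟨q, t, h, hz, h₁, by simpa using h₂⟩
    | succ n ih =>
      intro q t h hz h₁ h₂
      by_cases hq : |q| * (b - a) ≤ ε
      · exact ⟨q, t, h, hz, h₁, hq⟩
      obtain ⟨i, hi, hzi⟩ := h.exists_comp_mem_image hcopy hcover hz
      refine ih _ _ hi hzi ?_ ?_ <;> rw [abs_mul]
      · calc ρₘ * ε ≤ ρₘ * (|q| * (b - a)) := mul_le_mul_of_nonneg_left (not_le.1 hq).le hρₘ
          _ ≤ |ρ i| * (|q| * (b - a)) := by gcongr; exact (hρ i).1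
          _ = |q| * |ρ i| * (b - a) := by ring
      · calc |q| * |ρ i| * R ^ n * (b - a) ≤ |q| * R * R ^ n * (b - a) := by
              gcongr; exact (hρ i).2
          _ = |q| * R ^ (n + 1) * (b - a) := by ring
          _ ≤ ε := h₂
  obtain ⟨n, hn⟩ := exists_pow_lt_of_lt_one (div_pos hε hba) hR
  rw [lt_div_iff₀ hba] at hn
  obtain ⟨q, t, h, hzq, h₁, h₂⟩ := key n 1 0 IsSimilarCopy.one_zero ⟨z, hz, by ring⟩
    (by rw [abs_one, one_mul]; exact (mul_le_of_le_one_left hε.le (by linarith [hρ i₀])).trans hεab)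
    (by simpa using hn.le)
  exact ⟨q, t, h, image_affine_Icc_eq_uIcc (sub_pos.1 hba).le q t ▸ hzq, h₁, h₂⟩

theorem exists_horizontalChord (hcopy : ∀ i, IsSimilarCopy g a b (ρ i) (β i))
    (hcover : Icc a b ⊆ ⋃ i, (fun x => ρ i * x + β i) '' Icc a b) (hgab : g a = g b)
    {ρₘ R : ℝ} (hρₘ : 0 ≤ ρₘ) (hρ : ∀ i, ρₘ ≤ |ρ i| ∧ |ρ i| ≤ R) (hR : R < 1)
    {x y : ℝ} (hx : x ∈ Icc a b) (hy : y ∈ Icc a b) (hxy : x < y) :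
    ∃ c ∈ Icc a b, ∃ d ∈ Icc a b,
      x ≤ c ∧ c ≤ d ∧ d ≤ y ∧ ρₘ / 2 * (y - x) ≤ d - c ∧ g c = g d := by
  have hab : a ≤ b := hx.1.trans (hxy.le.trans hy.2)
  obtain ⟨q, t, h, hz, h₁, h₂⟩ := exists_isSimilarCopy_mem_uIcc hcopy hcover hρₘ hρ hR
    (z := (x + y) / 2) (ε := (y - x) / 2) ⟨by linarith [hx.1], by linarith [hy.2]⟩
    (by linarith) (by linarith [hx.1, hy.2])
  set u := q * a + t
  set v := q * b + t
  have hguv : g u = g v := by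
    have := h.2 a (left_mem_Icc.2 hab) b (right_mem_Icc.2 hab)
    rwa [hgab, sub_self, mul_zero, sub_eq_zero] at this
  have hlen : u ⊔ v - u ⊓ v = |q| * (b - a) := by
    rw [sup_sub_inf_eq_abs_sub, show v - u = q * (b - a) by ring, abs_mul,
      abs_of_nonneg (sub_nonneg.2 hab)]
  have hsub : uIcc u v ⊆ Icc a b :=
    uIcc_subset_Icc (h.1 (left_mem_Icc.2 hab)) (h.1 (right_mem_Icc.2 hab))
  refine ⟨u ⊓ v, hsub (left_mem_Icc.2 inf_le_sup), u ⊔ v, hsub (right_mem_Icc.2 inf_le_sup),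
    by linarith [hz.2], inf_le_sup, by linarith [hz.1], by linarith, ?_⟩
  rcases le_total u v with huv | hvu
  · rw [inf_of_le_left huv, sup_of_le_right huv, hguv]
  · rw [inf_of_le_right hvu, sup_of_le_left hvu, hguv]

theorem sub_le_of_isSimilarCopy [Fintype ι] (hab : a < b)
    (hcopy : ∀ i, IsSimilarCopy g a b (ρ i) (β i))
    (hcover : Icc a b ⊆ ⋃ i, (fun x => ρ i * x + β i) '' Icc a b) {R M : ℝ}
    (hR : ∀ i, |ρ i| ≤ R) (hR₁ : R < 1) (hM : ∀ x ∈ Icc a b, |g x| ≤ M)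
    {x y : ℝ} (hx : x ∈ Icc a b) (hy : y ∈ Icc a b) (hxy : x ≤ y) :
    g y - g x ≤ 4 * M / (b - a) * (y - x) := by
  have hba : 0 < b - a := sub_pos.2 hab
  obtain ⟨i₀, -⟩ := mem_iUnion.1 (hcover hx)
  have hR₀ : 0 ≤ R := (abs_nonneg _).trans (hR i₀)
  have hC : 0 ≤ 2 * M / (b - a) := by
    have := (abs_nonneg _).trans (hM x hx)
    positivity
  have key (n : ℕ) : g y - g x ≤ 2 * M / (b - a) * (2 * (y - x) + 2 * (R ^ n * (b - a))) := by
    obtain ⟨F, hF, hFcov⟩ := exists_finset_isSimilarCopy_cover hcopy hcover hR n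
    let J (p : ℝ × ℝ) : ℝ × ℝ :=
      ((p.1 * a + p.2) ⊓ (p.1 * b + p.2), (p.1 * a + p.2) ⊔ (p.1 * b + p.2))
    have hJ (p : ℝ × ℝ) : Icc (J p).1 (J p).2 = (fun x => p.1 * x + p.2) '' Icc a b :=
      (image_affine_Icc_eq_uIcc hab.le _ _).symm
    have hJlen (p : ℝ × ℝ) : (J p).2 - (J p).1 = |p.1| * (b - a) := by
      rw [sup_sub_inf_eq_abs_sub, show p.1 * b + p.2 - (p.1 * a + p.2) = p.1 * (b - a) by ring,
        abs_mul, abs_of_pos hba]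
    have hlen : ∀ J' ∈ F.image J, J'.2 - J'.1 ≤ R ^ n * (b - a) := by
      simp only [Finset.mem_image]
      rintro _ ⟨p, hp, rfl⟩
      rw [hJlen]
      exact mul_le_mul_of_nonneg_right (hF p hp).2 hba.le
    refine (sub_le_of_subset_biUnion_Icc hC (F.image J) hlen ?_ hxy ?_
      (h := R ^ n * (b - a)) ?_).trans_eq (by ring)
    · simp only [Finset.mem_image]
      rintro _ ⟨p, hp, rfl⟩ u hu v hv
      rw [hJ] at hu hv
      have := (hF p hp).1.abs_sub_le hM hv hu
      rw [hJlen, show 2 * M / (b - a) * (|p.1| * (b - a)) = |p.1| * (2 * M) by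
        field_simp]
      exact (le_abs_self _).trans this
    · intro z hz
      obtain ⟨p, hp, hzp⟩ := mem_iUnion₂.1 (hFcov ⟨hx.1.trans hz.1, hz.2.trans hy.2⟩)
      exact mem_iUnion₂.2 ⟨J p, Finset.mem_image_of_mem J hp, (hJ p).symm ▸ hzp⟩
    · intro J' hJ' hxJ'
      linarith [hlen J' hJ', hxJ'.2]
  have hlim : Tendsto (fun n : ℕ => 2 * M / (b - a) * (2 * (y - x) + 2 * (R ^ n * (b - a))))
      atTop (𝓝 (4 * M / (b - a) * (y - x))) := by
    convert ((((tendsto_pow_atTop_nhds_zero_of_lt_one hR₀ hR₁).mul_const (b - a)).const_mul 2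
      ).const_add (2 * (y - x))).const_mul (2 * M / (b - a)) using 2
    ring
  exact ge_of_tendsto' hlim key

theorem antitoneOn_of_isSimilarCopy [Finite ι] (hab : a < b)
    (hcopy : ∀ i, IsSimilarCopy g a b (ρ i) (β i))
    (hcover : Icc a b ⊆ ⋃ i, (fun x => ρ i * x + β i) '' Icc a b)
    (hρ : ∀ i, 0 < |ρ i| ∧ |ρ i| < 1) {M : ℝ} (hM : ∀ x ∈ Icc a b, |g x| ≤ M)
    (hgab : g a = g b) : AntitoneOn g (Icc a b) := by
  have : Nonempty ι := (mem_iUnion.1 (hcover (left_mem_Icc.2 hab.le))).nonempty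
  have := Fintype.ofFinite ι
  obtain ⟨i₁, hi₁⟩ := Finite.exists_min fun i => |ρ i|
  obtain ⟨i₂, hi₂⟩ := Finite.exists_max fun i => |ρ i|
  have hρ' (i : ι) : |ρ i₁| ≤ |ρ i| ∧ |ρ i| ≤ |ρ i₂| := ⟨hi₁ i, hi₂ i⟩
  exact antitoneOn_of_horizontalChords (half_pos (hρ i₁).1) (by linarith [hρ i₁])
    (fun x hx y hy hxy => sub_le_of_isSimilarCopy hab hcopy hcover hi₂ (hρ i₂).2 hM hx hy hxy)
    (fun x hx y hy hxy => exists_horizontalChord hcopy hcover hgab (hρ i₁).1.le hρ' (hρ i₂).2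
      hx hy hxy)

theorem eqOn_of_isSimilarCopy [Finite ι] (hab : a < b)
    (hcopy : ∀ i, IsSimilarCopy g a b (ρ i) (β i))
    (hcover : Icc a b ⊆ ⋃ i, (fun x => ρ i * x + β i) '' Icc a b)
    (hρ : ∀ i, 0 < |ρ i| ∧ |ρ i| < 1) {M : ℝ} (hM : ∀ x ∈ Icc a b, |g x| ≤ M)
    (hgab : g a = g b) : EqOn g (fun _ => g a) (Icc a b) := by
  intro x hx
  have ha := left_mem_Icc.2 hab.le
  have h₁ := antitoneOn_of_isSimilarCopy hab hcopy hcover hρ hM hgab ha hx hx.1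
  have h₂ := antitoneOn_of_isSimilarCopy hab (fun i => (hcopy i).neg) hcover hρ
    (g := -g) (fun x hx => by simpa using hM x hx) (by simp [hgab]) ha hx hx.1
  simp only [Pi.neg_apply, neg_le_neg_iff] at h₂
  exact le_antisymm h₁ h₂

end SimilarCopies

theorem graphOn_Icc_eq_segment (ℓ : ℝ →ᵃ[ℝ] ℝ) {a b : ℝ} (hab : a ≤ b) :
    (Icc a b).graphOn ℓ = segment ℝ (a, ℓ a) (b, ℓ b) := by
  rw [← segment_eq_Icc hab]
  exact image_segment ℝ ((AffineMap.id ℝ ℝ).prod ℓ) a b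

theorem graphOn_eq_segment_of_selfAffine {ι : Type*} [Finite ι] {f : ℝ → ℝ} {a b : ℝ}
    (hab : a < b) (hf : ContinuousOn f (Icc a b)) {ρ β γ : ι → ℝ}
    (hρ : ∀ i, 0 < |ρ i| ∧ |ρ i| < 1)
    (hmaps : ∀ i, MapsTo (fun x => ρ i * x + β i) (Icc a b) (Icc a b))
    (hf_eq : ∀ i, ∀ x ∈ Icc a b, f (ρ i * x + β i) = ρ i * f x + γ i)
    (hcover : Icc a b ⊆ ⋃ i, (fun x => ρ i * x + β i) '' Icc a b) :
    (Icc a b).graphOn f = segment ℝ (a, f a) (b, f b) := by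
  set m := (f b - f a) / (b - a)
  let ℓ : ℝ →ᵃ[ℝ] ℝ := m • AffineMap.id ℝ ℝ + AffineMap.const ℝ ℝ (f a - m * a)
  have hℓ (x : ℝ) : ℓ x = m * x + (f a - m * a) := rfl
  have hℓb : ℓ b = f b := by
    have : m * (b - a) = f b - f a := div_mul_cancel₀ _ (sub_pos.2 hab).ne'
    linarith [hℓ b]
  have hcopy (i : ι) : IsSimilarCopy (fun x => f x - ℓ x) a b (ρ i) (β i) :=
    ⟨hmaps i, fun x hx y hy => by simp only [hℓ, hf_eq i x hx, hf_eq i y hy]; ring⟩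
  obtain ⟨M, hM⟩ := isCompact_Icc.exists_bound_of_continuousOn
    (hf.sub ℓ.continuous_of_finiteDimensional.continuousOn)
  have hfℓ : EqOn f ℓ (Icc a b) := fun x hx => by
    have := eqOn_of_isSimilarCopy hab hcopy hcover hρ hM (by simp only [hℓb, hℓ a]; ring) hx
    simp only [hℓ] at this ⊢
    linarith
  rw [(graphOn_inj (s := Icc a b)).2 hfℓ, graphOn_Icc_eq_segment ℓ hab.le,
    ← hfℓ (left_mem_Icc.2 hab.le), ← hfℓ (right_mem_Icc.2 hab.le)]

theorem isSelfSimilar_segment (p q : ℝ × ℝ) : IsSelfSimilar (segment ℝ p q) := by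
  let S : Fin 2 → ℝ × ℝ → ℝ × ℝ := ![fun v => (1 / 2 : ℝ) • v + (1 / 2 : ℝ) • p,
    fun v => (1 / 2 : ℝ) • v + (1 / 2 : ℝ) • q]
  have hS (t : ℝ) : S 0 (AffineMap.lineMap p q t) = AffineMap.lineMap p q (t / 2) ∧
      S 1 (AffineMap.lineMap p q t) = AffineMap.lineMap p q ((t + 1) / 2) := by
    simp only [S, AffineMap.lineMap_apply_module, Matrix.cons_val_zero, Matrix.cons_val_one]
    constructor <;> module
  refine ⟨convexHull_pair (𝕜 := ℝ) p q ▸ (toFinite {p, q}).isCompact_convexHull (𝕜 := ℝ), 2, S,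
    two_pos, fun i => ⟨1 / 2, 0, ![(1 / 2 : ℝ) • p, (1 / 2 : ℝ) • q] i, by norm_num,
      fun v => ?_⟩, ?_⟩
  · fin_cases i <;> simp [S, rot]
  simp only [segment_eq_image_lineMap]
  ext z
  constructor
  · rintro ⟨t, ⟨ht₀, ht₁⟩, rfl⟩
    rcases le_total t (1 / 2) with ht | ht
    · refine mem_iUnion.2 ⟨0, _, ⟨2 * t, ⟨by linarith, by linarith⟩, rfl⟩, ?_⟩
      rw [(hS _).1]
      ring_nf
    · refine mem_iUnion.2 ⟨1, _, ⟨2 * t - 1, ⟨by linarith, by linarith⟩, rfl⟩, ?_⟩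
      rw [(hS _).2]
      ring_nf
  · intro hz
    obtain ⟨i, _, ⟨t, ⟨ht₀, ht₁⟩, rfl⟩, rfl⟩ := mem_iUnion.1 hz
    fin_cases i
    · exact ⟨t / 2, ⟨by linarith, by linarith⟩, (hS t).1.symm⟩
    · exact ⟨(t + 1) / 2, ⟨by linarith, by linarith⟩, (hS t).2.symm⟩

theorem graph_selfSimilar_iff_segment (a b : ℝ) (hab : a < b) (f : ℝ → ℝ)
    (hf : ContinuousOn f (Set.Icc a b))
    (G : Set (ℝ × ℝ)) (hG : G = (fun x => (x, f x)) '' Set.Icc a b) :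
    IsSelfSimilar G ↔ G = segment ℝ ((a, f a) : ℝ × ℝ) ((b, f b) : ℝ × ℝ) := by
  change G = (Icc a b).graphOn f at hG
  subst hG
  refine ⟨fun h => ?_, fun h => h ▸ isSelfSimilar_segment _ _⟩
  obtain ⟨k, ρ, β, γ, hρ, hmaps, hf_eq, hcover⟩ :=
    exists_affine_selfMaps_of_isSelfSimilar_graphOn (convex_Icc a b)
      ⟨a, left_mem_Icc.2 hab.le, b, right_mem_Icc.2 hab.le, hab.ne⟩ hf h
  exact graphOn_eq_segment_of_selfAffine hab hf hρ hmaps hf_eq hcover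
end
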